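/- For every linear relational structure A over ℤ₂ there exists a homogeneous linear relational structure B such that Γ(A) ≅ Γ_H(B). Explicitly, B has variable set V ⊔ {j}; each constraint ((v₁,…,v_m), 0) of A is a constraint ((v₁,…,v_m), 0) of B; each constraint ((v₁,…,v_m), 1) of A is replaced by the constraint ((v₁,…,v_m, j), 0) of B; and for each v ∈ V one adds the constraint ((v, j, v, j), 0). Then the assignment x_v ↦ x_v (v ∈ V) and J ↦ x_j extends to a group isomorphism Γ(A) → Γ_H(B). -/

import Mathlib

/-- A linear relational structure over `ℤ₂`: a set `V` of variables and a family `C` of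
constraints, each constraint `c` being a tuple `var c : Fin (len c) → V` of variables
together with a right-hand side `rhs c ∈ ℤ₂`. -/
structure LinStruct where
  V : Type
  C : Type
  len : C → ℕ
  var : (c : C) → Fin (len c) → V
  rhs : C → ZMod 2

namespace LinStruct

open scoped commutatorElement

/-- A linear relational structure is homogeneous if every constraint has right-hand
side `0`. -/
def Homogeneous (A : LinStruct) : Prop := ∀ c, A.rhs c = 0

/-- The word `x_{v₁} ⋯ x_{v_m}` of a constraint, in the free group on the generators
`Option V`, where `some v` is the generator `x_v` and `none` is the generator `J`. -/
def constraintWord (A : LinStruct) (c : A.C) : FreeGroup (Option A.V) :=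
  (List.ofFn fun i => FreeGroup.of (some (A.var c i))).prod

/-- The relations of the solution group `Γ(A)`: `x_v² = 1`, `J² = 1`, `x_v J = J x_v`,
and for each constraint `x_{v₁}⋯x_{v_m} J^{b} = 1` (equivalently `= J^b`, as `J² = 1`)
with pairwise commutation of the variables occurring in it. -/
def rels (A : LinStruct) : Set (FreeGroup (Option A.V)) :=
  (Set.range fun v : A.V => (FreeGroup.of (some v)) ^ 2) ∪
  {(FreeGroup.of (none : Option A.V)) ^ 2} ∪
  (Set.range fun v : A.V =>
    ⁅FreeGroup.of (some v), FreeGroup.of (none : Option A.V)⁆) ∪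
  (Set.range fun c : A.C =>
    A.constraintWord c * (FreeGroup.of (none : Option A.V)) ^ (A.rhs c).val) ∪
  {w | ∃ (c : A.C) (i j : Fin (A.len c)),
    w = ⁅FreeGroup.of (some (A.var c i)), FreeGroup.of (some (A.var c j))⁆}

/-- The word `x_{v₁} ⋯ x_{v_m}` of a constraint, in the free group on `V`. -/
def constraintWordH (A : LinStruct) (c : A.C) : FreeGroup A.V :=
  (List.ofFn fun i => FreeGroup.of (A.var c i)).prod

/-- The relations of the homogeneous solution group `Γ_H(A)`: `x_v² = 1`, the constraint
products equal `1`, and pairwise commutation of generators occurring in a common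
constraint. -/
def relsH (A : LinStruct) : Set (FreeGroup A.V) :=
  (Set.range fun v : A.V => (FreeGroup.of v) ^ 2) ∪
  (Set.range fun c : A.C => A.constraintWordH c) ∪
  {w | ∃ (c : A.C) (i j : Fin (A.len c)),
    w = ⁅FreeGroup.of (A.var c i), FreeGroup.of (A.var c j)⁆}

/-- The homogenisation `B` of `A`: variables `V ⊔ {j}` (`none` is the new variable `j`);
each constraint `(𝐯, 0)` of `A` is kept, each constraint `(𝐯, 1)` gets `j` appended
(with right-hand side `0`), and for each `v ∈ V` the constraint `((v, j, v, j), 0)`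
is added. -/
def homogenise (A : LinStruct) : LinStruct where
  V := Option A.V
  C := A.C ⊕ A.V
  len := fun c => match c with
    | Sum.inl c0 => A.len c0 + (A.rhs c0).val
    | Sum.inr _ => 4
  var := fun c => match c with
    | Sum.inl c0 => fun i =>
        if h : (i : ℕ) < A.len c0 then some (A.var c0 ⟨i, h⟩) else none
    | Sum.inr v => ![some v, none, some v, none]
  rhs := fun _ => 0

lemma wordH_inl (A : LinStruct) (c : A.C) :
    A.homogenise.constraintWordH (Sum.inl c) =
      A.constraintWord c * (FreeGroup.of (none : Option A.V)) ^ (A.rhs c).val := by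
  have hb : (A.rhs c).val = 0 ∨ (A.rhs c).val = 1 := by
    have := ZMod.val_lt (A.rhs c); omega
  show (List.ofFn fun i : Fin (A.len c + (A.rhs c).val) =>
      FreeGroup.of (A.homogenise.var (Sum.inl c) i)).prod = _
  rcases hb with hb | hb
  · rw [List.ofFn_congr (by omega : A.len c + (A.rhs c).val = A.len c) _]
    have h1 : (FreeGroup.of (none : Option A.V)) ^ (A.rhs c).val = 1 := by
      rw [hb, pow_zero]
    rw [h1, mul_one]
    unfold constraintWord
    refine congrArg List.prod (congrArg List.ofFn (funext fun i => ?_))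
    have hi : ((Fin.cast (by omega : A.len c + (A.rhs c).val = A.len c).symm i : Fin _) : ℕ) < A.len c := by
      simpa using i.isLt
    simp [homogenise, hi]
  · rw [List.ofFn_congr (by omega : A.len c + (A.rhs c).val = A.len c + 1) _]
    rw [List.ofFn_succ', List.concat_eq_append, List.prod_append, List.prod_cons,
      List.prod_nil, mul_one]
    have h1 : (FreeGroup.of (none : Option A.V)) ^ (A.rhs c).val = FreeGroup.of none := by
      rw [hb, pow_one]
    rw [h1]
    congr 1
    · unfold constraintWord
      refine congrArg List.prod (congrArg List.ofFn (funext fun i => ?_))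
      have hi : ((Fin.cast (by omega : A.len c + (A.rhs c).val = A.len c + 1).symm i.castSucc : Fin _) : ℕ) < A.len c := by
        simpa using i.isLt
      simp [homogenise, hi]
    · have hlast : ¬ ((Fin.cast (by omega : A.len c + (A.rhs c).val = A.len c + 1).symm (Fin.last (A.len c)) : Fin _) : ℕ) < A.len c := by
        simp
      simp [homogenise, hlast]

/-- **Lemma (homogenise).** For every linear relational structure `A` over `ℤ₂`, the
structure `B = homogenise A` is homogeneous, and the assignment `x_v ↦ x_v`, `J ↦ x_j`
extends to a group isomorphism `Γ(A) ≅ Γ_H(B)`. -/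
theorem stmt18 (A : LinStruct) :
    A.homogenise.Homogeneous ∧
    ∃ e : PresentedGroup A.rels ≃* PresentedGroup A.homogenise.relsH,
      (∀ v : A.V,
        e (PresentedGroup.of (some v)) = PresentedGroup.of (some v)) ∧
      e (PresentedGroup.of (none : Option A.V)) =
        PresentedGroup.of (none : Option A.V) := by
  refine ⟨fun c => rfl, ?_⟩
  -- the two sets of relations have the same normal closure
  set N1 := Subgroup.normalClosure A.rels with hN1
  -- forward inclusion: every relation of `A` is literally a relation of `homogenise A`
  have hsub : A.rels ⊆ A.homogenise.relsH := by
    rintro r (((((⟨v, rfl⟩ | hr) | ⟨v, rfl⟩) | ⟨c, rfl⟩) | ⟨c, i, j, rfl⟩))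
    · exact Or.inl (Or.inl ⟨some v, rfl⟩)
    · rw [Set.mem_singleton_iff] at hr
      rw [hr]
      exact Or.inl (Or.inl ⟨none, rfl⟩)
    · refine Or.inr ⟨Sum.inr v, ⟨0, by show (0:ℕ) < 4; norm_num⟩, ⟨1, by show (1:ℕ) < 4; norm_num⟩, ?_⟩
      simp [homogenise]; rfl
    · exact Or.inl (Or.inr ⟨Sum.inl c, wordH_inl A c⟩)
    · refine Or.inr ⟨Sum.inl c, ⟨i, ?_⟩, ⟨j, ?_⟩, ?_⟩
      · show (i : ℕ) < A.len c + (A.rhs c).val; omega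
      · show (j : ℕ) < A.len c + (A.rhs c).val; omega
      · simp [homogenise]; rfl
  -- basic membership facts in `N1`
  have hsq : ∀ u : Option A.V, (FreeGroup.of u) ^ 2 ∈ N1 := by
    rintro (_ | v)
    · exact Subgroup.subset_normalClosure (Or.inl (Or.inl (Or.inl (Or.inr rfl))))
    · exact Subgroup.subset_normalClosure (Or.inl (Or.inl (Or.inl (Or.inl ⟨v, rfl⟩))))
  have hcm : ∀ v : A.V,
      ⁅FreeGroup.of (some v), FreeGroup.of (none : Option A.V)⁆ ∈ N1 := fun v =>
    Subgroup.subset_normalClosure (Or.inl (Or.inl (Or.inr ⟨v, rfl⟩)))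
  have hmix : ∀ u₁ u₂ : Option A.V,
      ⁅FreeGroup.of u₁, FreeGroup.of u₂⁆ ∈ N1 →
      ⁅FreeGroup.of u₂, FreeGroup.of u₁⁆ ∈ N1 := by
    intro u₁ u₂ h
    rw [← commutatorElement_inv]
    exact N1.inv_mem h
  -- the projection onto the quotient
  set π := QuotientGroup.mk' N1 with hπ
  have hker : ∀ g : FreeGroup (Option A.V), π g = 1 ↔ g ∈ N1 := by
    intro g
    exact QuotientGroup.eq_one_iff g
  -- reverse inclusion
  have hsub2 : A.homogenise.relsH ⊆ (N1 : Set (FreeGroup (Option A.V))) := by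
    rintro r ((⟨u, rfl⟩ | ⟨c, rfl⟩) | ⟨c, i, j, rfl⟩)
    · exact hsq u
    · rcases c with c0 | v
      · show A.homogenise.constraintWordH (Sum.inl c0) ∈ (N1 : Set (FreeGroup (Option A.V)))
        rw [wordH_inl]
        exact Subgroup.subset_normalClosure (Or.inl (Or.inr ⟨c0, rfl⟩))
      · show A.homogenise.constraintWordH (Sum.inr v) ∈ (N1 : Set (FreeGroup (Option A.V)))
        have hw : A.homogenise.constraintWordH (Sum.inr v) =
            FreeGroup.of (some v) * FreeGroup.of (none : Option A.V) *
              FreeGroup.of (some v) * FreeGroup.of (none : Option A.V) := by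
          show (List.ofFn fun i : Fin 4 => FreeGroup.of (![some v, none, some v, none] i)).prod = _
          simp [List.ofFn_succ, mul_assoc]
        rw [hw]
        apply (hker _).mp
        have hXY : π (FreeGroup.of (some v)) * π (FreeGroup.of (none : Option A.V)) =
            π (FreeGroup.of (none : Option A.V)) * π (FreeGroup.of (some v)) := by
          have h1 : π ⁅FreeGroup.of (some v), FreeGroup.of (none : Option A.V)⁆ = 1 :=
            (hker _).mpr (hcm v)
          rw [map_commutatorElement] at h1
          exact commutatorElement_eq_one_iff_mul_comm.mp h1
        have hX : π (FreeGroup.of (some v)) * π (FreeGroup.of (some v)) = 1 := by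
          have := (hker _).mpr (hsq (some v)); rwa [map_pow, sq] at this
        have hY : π (FreeGroup.of (none : Option A.V)) *
            π (FreeGroup.of (none : Option A.V)) = 1 := by
          have := (hker _).mpr (hsq none); rwa [map_pow, sq] at this
        rw [map_mul, map_mul, map_mul]
        calc π (FreeGroup.of (some v)) * π (FreeGroup.of (none : Option A.V)) *
              π (FreeGroup.of (some v)) * π (FreeGroup.of (none : Option A.V))
            = π (FreeGroup.of (some v)) * (π (FreeGroup.of (none : Option A.V)) *
              π (FreeGroup.of (some v))) * π (FreeGroup.of (none : Option A.V)) := by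
              group
          _ = π (FreeGroup.of (some v)) * (π (FreeGroup.of (some v)) *
              π (FreeGroup.of (none : Option A.V))) * π (FreeGroup.of (none : Option A.V)) := by
              rw [hXY]
          _ = (π (FreeGroup.of (some v)) * π (FreeGroup.of (some v))) *
              (π (FreeGroup.of (none : Option A.V)) * π (FreeGroup.of (none : Option A.V))) := by
              group
          _ = 1 := by rw [hX, hY, one_mul]
    · -- commutators of the homogenised structure
      rcases c with c0 | v
      · have hval : ∀ k : Fin (A.homogenise.len (Sum.inl c0)),
            A.homogenise.var (Sum.inl c0) k = none ∨
            ∃ i' : Fin (A.len c0), A.homogenise.var (Sum.inl c0) k = some (A.var c0 i') := by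
          intro k
          by_cases h : (k : ℕ) < A.len c0
          · exact Or.inr ⟨⟨k, h⟩, by simp [homogenise, h]⟩
          · exact Or.inl (by simp [homogenise, h])
        rcases hval i with h1 | ⟨i', h1⟩ <;> rcases hval j with h2 | ⟨j', h2⟩ <;> rw [h1, h2]
        · rw [commutatorElement_self]; exact N1.one_mem
        · exact hmix _ _ (hcm (A.var c0 j'))
        · exact hcm (A.var c0 i')
        · exact Subgroup.subset_normalClosure (Or.inr ⟨c0, i', j', rfl⟩)
      · have hval : ∀ k : Fin (A.homogenise.len (Sum.inr v)),
            A.homogenise.var (Sum.inr v) k = some v ∨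
            A.homogenise.var (Sum.inr v) k = none := by
          intro k
          fin_cases k <;> simp [homogenise]
        rcases hval i with h1 | h1 <;> rcases hval j with h2 | h2 <;> rw [h1, h2]
        · rw [commutatorElement_self]; exact N1.one_mem
        · exact hcm v
        · exact hmix _ _ (hcm v)
        · rw [commutatorElement_self]; exact N1.one_mem
  have heq : N1 = Subgroup.normalClosure A.homogenise.relsH :=
    le_antisymm
      (@Subgroup.normalClosure_le_normal _ _ _ _ Subgroup.normalClosure_normal (hsub.trans Subgroup.subset_normalClosure))
      (@Subgroup.normalClosure_le_normal _ _ _ _ Subgroup.normalClosure_normal hsub2)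
  exact ⟨@QuotientGroup.quotientMulEquivOfEq _ _ _ _ Subgroup.normalClosure_normal Subgroup.normalClosure_normal heq,
    fun v => @QuotientGroup.quotientMulEquivOfEq_mk _ _ _ _ Subgroup.normalClosure_normal Subgroup.normalClosure_normal heq _,
    @QuotientGroup.quotientMulEquivOfEq_mk _ _ _ _ Subgroup.normalClosure_normal Subgroup.normalClosure_normal heq _⟩

end LinStruct
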